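/- For n ≥ 1, let W_n be F_n with the last two letters removed; W_n is a palindrome whose length is even when n ≡ 1 (mod 3), odd with central letter a when n ≡ 2 (mod 3), and odd with central letter b when n ≡ 0 (mod 3). -/
import Mathlib


/-- The two-letter alphabet: `A` and `B`. -/
inductive Letter : Type
  | A : Letter
  | B : Letter
  deriving DecidableEq, Repr

open Letter

/-- The Fibonacci substitution θ : a → ab, b → a. -/
def theta : Letter → List Letter
  | A => [A, B]
  | B => [A]

/-- Extension of the substitution to words, by concatenation. -/
def substWord (w : List Letter) : List Letter := w.flatMap theta

/-- The n-th finite Fibonacci word F_n = θ^n(a). -/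
def FibWord (n : ℕ) : List Letter := substWord^[n] [A]

/-- The infinite Fibonacci word (each F_n is a prefix of all later ones,
and `FibWord (k+1)` has length `fib (k+3) ≥ k+1`, so index `k` is defined). -/
def FibSeq (k : ℕ) : Letter := (FibWord (k + 1)).getD k A

/-- `Wword n` is the Fibonacci word F_n with its final two letters removed. -/
def Wword (n : ℕ) : List Letter := (FibWord n).dropLast.dropLast

/-! ### Auxiliary machinery -/

/-- The pair of letters deleted from `FibWord n` to get `Wword n`. -/
def tpair (n : ℕ) : List Letter := if n % 2 = 1 then [A, B] else [B, A]

lemma tpair_add_two (n : ℕ) : tpair (n + 2) = tpair n := by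
  have : (n + 2) % 2 = n % 2 := by omega
  simp [tpair, this]

lemma tpair_exists (n : ℕ) : ∃ x y : Letter, tpair n = [x, y] := by
  unfold tpair; split
  · exact ⟨A, B, rfl⟩
  · exact ⟨B, A, rfl⟩

lemma tpair_length (n : ℕ) : (tpair n).length = 2 := by
  obtain ⟨x, y, h⟩ := tpair_exists n; rw [h]; rfl

lemma tpair_reverse (n : ℕ) : (tpair n).reverse = tpair (n + 1) := by
  rcases Nat.mod_two_eq_zero_or_one n with h | h
  · have h1 : (n + 1) % 2 = 1 := by omega
    simp [tpair, h, h1]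
  · have h1 : (n + 1) % 2 = 0 := by omega
    simp [tpair, h, h1]

lemma substWord_append (u v : List Letter) :
    substWord (u ++ v) = substWord u ++ substWord v := List.flatMap_append ..

lemma fibWord_succ (n : ℕ) : FibWord (n + 1) = substWord (FibWord n) :=
  Function.iterate_succ_apply' ..

lemma fibWord_add_two (n : ℕ) : FibWord (n + 2) = FibWord (n + 1) ++ FibWord n := by
  induction n with
  | zero => decide
  | succ k ih =>
    calc FibWord (k + 3) = substWord (FibWord (k + 2)) := fibWord_succ _
      _ = substWord (FibWord (k + 1)) ++ substWord (FibWord k) := by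
          rw [ih, substWord_append]
      _ = FibWord (k + 1 + 1) ++ FibWord (k + 1) := by
          rw [← fibWord_succ, ← fibWord_succ]

lemma drop2 (M : List Letter) (x y : Letter) :
    ((M ++ [x, y]).dropLast.dropLast) = M := by
  have h : M ++ [x, y] = (M ++ [x]) ++ [y] := by simp
  rw [h, List.dropLast_concat, List.dropLast_concat]

lemma fib_decomp_aux (n : ℕ) :
    (FibWord (n + 1) = Wword (n + 1) ++ tpair (n + 1)) ∧
    (FibWord (n + 2) = Wword (n + 2) ++ tpair (n + 2)) := by
  induction n with
  | zero => constructor <;> decide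
  | succ k ih =>
    refine ⟨ih.2, ?_⟩
    obtain ⟨x, y, hxy⟩ := tpair_exists (k + 1)
    have h : FibWord (k + 3) = (FibWord (k + 2) ++ Wword (k + 1)) ++ [x, y] := by
      rw [show k + 3 = (k + 1) + 2 by ring, fibWord_add_two, ih.1, hxy]
      simp
    have hW : Wword (k + 3) = FibWord (k + 2) ++ Wword (k + 1) := by
      rw [Wword, h, drop2]
    rw [show k + 1 + 2 = (k + 1) + 2 by ring, tpair_add_two, hxy, hW, h]

lemma fib_decomp (n : ℕ) (hn : 1 ≤ n) : FibWord n = Wword n ++ tpair n := by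
  obtain ⟨k, rfl⟩ := Nat.exists_eq_add_of_le hn
  rw [Nat.add_comm]
  exact (fib_decomp_aux k).1

lemma wword_add_two (n : ℕ) (hn : 1 ≤ n) :
    Wword (n + 2) = Wword (n + 1) ++ tpair (n + 1) ++ Wword n := by
  have h1 : FibWord (n + 2) = Wword (n + 2) ++ tpair (n + 2) := (fib_decomp_aux n).2
  have h2 : FibWord (n + 2) = (Wword (n + 1) ++ tpair (n + 1) ++ Wword n) ++ tpair n := by
    rw [fibWord_add_two, fib_decomp (n + 1) (by omega), fib_decomp n hn]
    simp [List.append_assoc]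
  rw [tpair_add_two] at h1
  exact List.append_cancel_right (h1.symm.trans h2)

/-- The near-commutation identity. -/
lemma comm_lemma : ∀ n, 1 ≤ n →
    Wword (n + 1) ++ tpair (n + 1) ++ Wword n = Wword n ++ tpair n ++ Wword (n + 1) := by
  intro n hn
  induction n with
  | zero => omega
  | succ k ih =>
    rcases Nat.lt_or_ge k 2 with hk | hk
    · interval_cases k
      · decide
      · decide
    · have hk1 : 1 ≤ k := by omega
      have hC : Wword (k + 1) ++ tpair (k + 1) ++ Wword k
          = Wword k ++ tpair k ++ Wword (k + 1) := ih hk1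
      -- goal: W(k+2) ++ t(k+2) ++ W(k+1) = W(k+1) ++ t(k+1) ++ W(k+2)
      rw [wword_add_two k hk1, tpair_add_two]
      -- LHS: (W(k+1)++t(k+1)++W k) ++ t k ++ W(k+1)
      -- RHS: W(k+1) ++ t(k+1) ++ (W(k+1)++t(k+1)++W k)
      calc Wword (k+1) ++ tpair (k+1) ++ Wword k ++ tpair k ++ Wword (k+1)
          = Wword (k+1) ++ tpair (k+1) ++ (Wword k ++ tpair k ++ Wword (k+1)) := by
            simp [List.append_assoc]
        _ = Wword (k+1) ++ tpair (k+1) ++ (Wword (k+1) ++ tpair (k+1) ++ Wword k) := by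
            rw [← hC]

lemma pal_aux (n : ℕ) :
    (Wword (n + 1)).reverse = Wword (n + 1) ∧ (Wword (n + 2)).reverse = Wword (n + 2) := by
  induction n with
  | zero => constructor <;> decide
  | succ k ih =>
    refine ⟨ih.2, ?_⟩
    have hw : Wword (k + 3) = Wword (k + 2) ++ tpair (k + 2) ++ Wword (k + 1) :=
      wword_add_two (k + 1) (by omega)
    have ht : (tpair (k + 2)).reverse = tpair (k + 1) := by
      rw [tpair_reverse]
      have : k + 2 + 1 = (k + 1) + 2 := by omega
      rw [this, tpair_add_two]
    have hc := comm_lemma (k + 1) (by omega)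
    rw [hw, List.reverse_append, List.reverse_append, ih.1, ih.2, ht]
    simp only [List.append_assoc] at hc ⊢
    exact hc.symm

lemma wword_expand (n : ℕ) (hn : 1 ≤ n) :
    Wword (n + 3) =
      (Wword (n + 1) ++ tpair (n + 1)) ++ (Wword n ++ (tpair (n + 2) ++ Wword (n + 1))) := by
  have h1 : Wword (n + 1 + 2) = Wword (n + 1 + 1) ++ tpair (n + 1 + 1) ++ Wword (n + 1) :=
    wword_add_two (n + 1) (by omega)
  have h2 : Wword (n + 2) = Wword (n + 1) ++ tpair (n + 1) ++ Wword n := wword_add_two n hn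
  have e1 : Wword (n + 3) = Wword (n + 2) ++ tpair (n + 2) ++ Wword (n + 1) := h1
  rw [e1, h2]
  simp [List.append_assoc]

lemma center_step (n : ℕ) (hn : 1 ≤ n) (x : Letter) (m' : ℕ)
    (hlen : (Wword n).length = 2 * m' + 1) (hget : (Wword n)[m']? = some x) :
    ∃ m, (Wword (n + 3)).length = 2 * m + 1 ∧ (Wword (n + 3))[m]? = some x := by
  refine ⟨(Wword (n + 1)).length + 2 + m', ?_, ?_⟩
  · rw [wword_expand n hn]
    simp only [List.length_append, tpair_length, hlen]
    omega
  · rw [wword_expand n hn]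
    have hu : (Wword (n + 1) ++ tpair (n + 1)).length = (Wword (n + 1)).length + 2 := by
      simp [tpair_length]
    rw [List.getElem?_append_right (by rw [hu]; omega)]
    have hidx : (Wword (n + 1)).length + 2 + m' - (Wword (n + 1) ++ tpair (n + 1)).length = m' := by
      rw [hu]; omega
    rw [hidx, List.getElem?_append_left (by omega)]
    exact hget

lemma center_aux (k : ℕ) :
    Even (Wword (3 * k + 1)).length ∧
    (∃ m, (Wword (3 * k + 2)).length = 2 * m + 1 ∧ (Wword (3 * k + 2))[m]? = some A) ∧
    (∃ m, (Wword (3 * k + 3)).length = 2 * m + 1 ∧ (Wword (3 * k + 3))[m]? = some B) := by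
  induction k with
  | zero =>
    refine ⟨?_, ⟨0, ?_, ?_⟩, ⟨1, ?_, ?_⟩⟩ <;> decide
  | succ j ih =>
    refine ⟨?_, ?_, ?_⟩
    · rw [show 3 * (j + 1) + 1 = (3 * j + 1) + 3 by ring, wword_expand (3 * j + 1) (by omega)]
      obtain ⟨r, hr⟩ := ih.1
      simp only [List.length_append, tpair_length]
      exact ⟨(Wword (3 * j + 1 + 1)).length + 2 + r, by omega⟩
    · obtain ⟨m', h1, h2⟩ := ih.2.1
      rw [show 3 * (j + 1) + 2 = (3 * j + 2) + 3 by ring]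
      exact center_step (3 * j + 2) (by omega) A m' h1 h2
    · obtain ⟨m', h1, h2⟩ := ih.2.2
      rw [show 3 * (j + 1) + 3 = (3 * j + 3) + 3 by ring]
      exact center_step (3 * j + 3) (by omega) B m' h1 h2

/-- W_n is a palindrome; its length is even when n ≡ 1 (mod 3), it has odd
length 2m+1 with central ((m+1)-th) letter `a` when n ≡ 2 (mod 3), and odd
length with central letter `b` when n ≡ 0 (mod 3). -/
theorem fib_word_palindrome_central_letter (n : ℕ) (hn : 1 ≤ n) :
    List.Palindrome (Wword n) ∧
    (n % 3 = 1 → Even (Wword n).length) ∧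
    (n % 3 = 2 → ∃ m : ℕ, (Wword n).length = 2 * m + 1 ∧ (Wword n)[m]? = some A) ∧
    (n % 3 = 0 → ∃ m : ℕ, (Wword n).length = 2 * m + 1 ∧ (Wword n)[m]? = some B) := by
  refine ⟨?_, ?_, ?_, ?_⟩
  · obtain ⟨k, rfl⟩ := Nat.exists_eq_add_of_le hn
    rw [Nat.add_comm]
    exact List.Palindrome.of_reverse_eq (pal_aux k).1
  all_goals {
    obtain ⟨k, hk⟩ : ∃ k, n = 3 * k + 1 ∨ n = 3 * k + 2 ∨ n = 3 * k + 3 := ⟨(n - 1) / 3, by omega⟩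
    rcases hk with rfl | rfl | rfl <;> intro h <;>
      first
        | exact absurd h (by omega)
        | exact (center_aux k).1
        | exact (center_aux k).2.1
        | exact (center_aux k).2.2
  }
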